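/- arXiv:2512.19489 — 3 statements merged into one kernel-verified Lean document; each statement's English description precedes it below -/
import Mathlib

section
/- Preservation of absolute continuity under full-row-rank left multiplication (Lemma 2 of the appendix). Let I, I', L be positive integers with I' ≤ I, and let P ∈ ℝ^{I'×I} be a matrix with full row rank, i.e., rank(P) = I'. If μ is a measure on the space of I×L real matrices that is absolutely continuous with respect to Lebesgue (volume) measure, then the pushforward of μ under the map A ↦ P·A is absolutely continuous with respect to Lebesgue (volume) measure on the space of I'×L real matrices. -/
/-!
A full-row-rank `P` has a right inverse, so `A ↦ P * A` is a surjective linear map. The image of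
Lebesgue measure under a surjective linear map is a (possibly infinite) positive multiple of
Lebesgue measure on the target, hence every Lebesgue-null set pulls back to a Lebesgue-null set.
-/

open MeasureTheory

/-- Lebesgue (volume) measure on a real matrix space: the standard product
Lebesgue measure on the entries (inherited from the Pi type). -/
noncomputable instance matrixMeasureSpace (m n : ℕ) :
    MeasureSpace (Matrix (Fin m) (Fin n) ℝ) :=
  inferInstanceAs (MeasureSpace (Fin m → Fin n → ℝ))

theorem LinearMap.map_absolutelyContinuous_addHaar
    {𝕜 E F : Type*} [NontriviallyNormedField 𝕜] [CompleteSpace 𝕜]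
    [NormedAddCommGroup E] [MeasurableSpace E] [BorelSpace E] [NormedSpace 𝕜 E]
    [LocallyCompactSpace E]
    [NormedAddCommGroup F] [MeasurableSpace F] [BorelSpace F] [NormedSpace 𝕜 F]
    {L : E →ₗ[𝕜] F} (hL : Function.Surjective L)
    (μ : Measure E) [μ.IsAddHaarMeasure] (ν : Measure F) [ν.IsAddHaarMeasure]
    {ρ : Measure E} (hρ : ρ ≪ μ) :
    ρ.map L ≪ ν := by
  have : FiniteDimensional 𝕜 E := .of_locallyCompactSpace 𝕜
  obtain ⟨c, -, hc⟩ := L.exists_map_addHaar_eq_smul_addHaar μ ν hL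
  refine (hρ.map L.continuous_of_finiteDimensional.measurable).trans ?_
  rw [hc]
  exact Measure.smul_absolutelyContinuous

theorem Matrix.mul_surjective_of_rank_eq_card {m n K : Type*} (l : Type*)
    [Fintype m] [DecidableEq m] [Fintype n] [Field K]
    {P : Matrix m n K} (hP : P.rank = Fintype.card m) :
    Function.Surjective fun A : Matrix n l K => P * A := by
  have hrange : LinearMap.range P.mulVecLin = ⊤ :=
    Submodule.eq_top_of_finrank_eq (by rw [← Matrix.rank, hP]; simp)
  obtain ⟨Q, hPQ⟩ := Matrix.mulVec_surjective_iff_exists_right_inverse.mp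
    (LinearMap.range_eq_top.mp hrange)
  exact fun B => ⟨Q * B, by simp [← Matrix.mul_assoc, hPQ]⟩

theorem pushforward_absolutelyContinuous_of_fullRowRank_general
    (I I' L : ℕ)
    (P : Matrix (Fin I') (Fin I) ℝ) (hP : P.rank = I')
    (μ : Measure (Matrix (Fin I) (Fin L) ℝ)) (hμ : μ ≪ volume) :
    μ.map (fun A => P * A) ≪ (volume : Measure (Matrix (Fin I') (Fin L) ℝ)) :=
  -- Matrices carry no norm instance; their Pi-type representation does, with the same volume.
  LinearMap.map_absolutelyContinuous_addHaar (E := Fin I → Fin L → ℝ) (F := Fin I' → Fin L → ℝ)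
    (L := mulLeftLinearMap (Fin L) ℝ P)
    (Matrix.mul_surjective_of_rank_eq_card _ (by simpa using hP)) volume volume hμ

/-- **Lemma 2 (appendix): preservation of absolute continuity under
full-row-rank left multiplication.** -/
theorem pushforward_absolutelyContinuous_of_fullRowRank
    (I I' L : ℕ) (hI : 0 < I) (hI' : 0 < I') (hL : 0 < L) (hle : I' ≤ I)
    (P : Matrix (Fin I') (Fin I) ℝ) (hP : P.rank = I')
    (μ : Measure (Matrix (Fin I) (Fin L) ℝ)) (hμ : μ ≪ volume) :
    μ.map (fun A => P * A) ≪ (volume : Measure (Matrix (Fin I') (Fin L) ℝ)) :=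
  pushforward_absolutelyContinuous_of_fullRowRank_general I I' L P hP μ hμ
end

section
/- Core-tensor and third-factor transfer lemma (the deterministic step (B.3)–(B.6) in the proof of Theorem 1). Let L, M, N, K be positive integers with N ≤ L·M and K ≥ N. Let D, D̄ ∈ ℝ^{L×M×N}, C, C̄ ∈ ℝ^{K×N}, and let Θ_a ∈ ℝ^{L×L}, Θ_b ∈ ℝ^{M×M} be invertible matrices. Assume: (i) the mode-3 unfolding D^(3) ∈ ℝ^{N×(L·M)} of D has rank N; (ii) rank(C) = N; (iii) D̄ ×₁ Θ_a ×₂ Θ_b ×₃ C̄ = D ×₃ C as tensors in ℝ^{L×M×K}. Then rank(C̄) = N, the mode-3 unfolding D̄^(3) of D̄ has rank N, and there exists an invertible matrix Θ_c ∈ ℝ^{N×N} such that C̄ = C·Θ_c and D̄ ×₁ Θ_a ×₂ Θ_b ×₃ Θ_c = D. -/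
/-!
Unfolding along mode 3 turns the hypothesis into the matrix identity `C' * F = C * D⁽³⁾` with
`F = D'⁽³⁾ * (Θa ⊗ₖ Θb)ᵀ`. If `H` is a left inverse of `C`, then `Θc := H * C'` satisfies
`Θc * F = D⁽³⁾`; since `D⁽³⁾` has full row rank, so do `Θc` (hence it is invertible) and `F`.
With `G` a right inverse of `F`, `C' = C' * F * G = C * Θc * F * G = C * Θc`.
-/

/-- Tucker (multilinear) product `D ×₁ A ×₂ B ×₃ C` of a third-order tensor
`D ∈ ℝ^{L×M×N}` with matrices `A ∈ ℝ^{I×L}`, `B ∈ ℝ^{J×M}`, `C ∈ ℝ^{K×N}`. -/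
def tucker {L M N I J K : ℕ} (D : Fin L → Fin M → Fin N → ℝ)
    (A : Matrix (Fin I) (Fin L) ℝ) (B : Matrix (Fin J) (Fin M) ℝ)
    (C : Matrix (Fin K) (Fin N) ℝ) : Fin I → Fin J → Fin K → ℝ :=
  fun i j k => ∑ l, ∑ m, ∑ n, D l m n * A i l * B j m * C k n

/-- Mode-3 unfolding of a third-order tensor `D ∈ ℝ^{L×M×N}`: the `N × (L·M)`
matrix with `D^(3)[n,(l,m)] = D[l,m,n]`. -/
def unfold3 {L M N : ℕ} (D : Fin L → Fin M → Fin N → ℝ) :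
    Matrix (Fin N) (Fin L × Fin M) ℝ :=
  Matrix.of fun n lm => D lm.1 lm.2 n

open scoped Matrix Kronecker

namespace Matrix

variable {K : Type*} [Field K] {κ ν π : Type*} [Fintype κ] [Fintype ν] [Fintype π]

theorem exists_mul_eq_one_of_rank_eq_card_height [DecidableEq κ] (A : Matrix κ ν K)
    (h : A.rank = Fintype.card κ) : ∃ B : Matrix ν κ K, A * B = 1 := by
  classical
  have hsurj : LinearMap.range A.mulVecLin = ⊤ :=
    Submodule.eq_top_of_finrank_eq (by simpa [rank] using h)
  obtain ⟨g, hg⟩ := A.mulVecLin.exists_rightInverse_of_surjective hsurj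
  refine ⟨LinearMap.toMatrix' g, toLin'.injective ?_⟩
  rw [toLin'_mul, toLin'_toMatrix', toLin'_one, toLin'_apply', hg]

theorem exists_mul_eq_one_of_rank_eq_card_width [DecidableEq ν] (A : Matrix κ ν K)
    (h : A.rank = Fintype.card ν) : ∃ B : Matrix ν κ K, B * A = 1 := by
  obtain ⟨B, hB⟩ := exists_mul_eq_one_of_rank_eq_card_height Aᵀ (by rwa [rank_transpose])
  exact ⟨Bᵀ, by simpa using congrArg transpose hB⟩

theorem isUnit_of_rank_eq_card [DecidableEq ν] (A : Matrix ν ν K)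
    (h : A.rank = Fintype.card ν) : IsUnit A := by
  obtain ⟨B, hB⟩ := exists_mul_eq_one_of_rank_eq_card_height A h
  exact (isUnit_iff_isUnit_det A).mpr (isUnit_det_of_right_inverse hB)

theorem isUnit_kronecker {R : Type*} [CommRing R] [DecidableEq κ] [DecidableEq ν]
    {A : Matrix κ κ R} {B : Matrix ν ν R} (hA : IsUnit A) (hB : IsUnit B) :
    IsUnit (A ⊗ₖ B) := by
  rw [isUnit_iff_isUnit_det] at hA hB ⊢
  rw [det_kronecker]
  exact (hA.pow _).mul (hB.pow _)

theorem exists_isUnit_of_mul_eq_mul [DecidableEq ν] {C C' : Matrix κ ν K} {E F : Matrix ν π K}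
    (hC : C.rank = Fintype.card ν) (hE : E.rank = Fintype.card ν) (h : C' * F = C * E) :
    ∃ Θ : Matrix ν ν K, IsUnit Θ ∧ C' = C * Θ ∧ Θ * F = E := by
  obtain ⟨H, hH⟩ := exists_mul_eq_one_of_rank_eq_card_width C hC
  set Θ := H * C'
  have hΘF : Θ * F = E := by rw [Matrix.mul_assoc, h, ← Matrix.mul_assoc, hH, Matrix.one_mul]
  have hΘ : IsUnit Θ := isUnit_of_rank_eq_card Θ <|
    le_antisymm (rank_le_card_height Θ) (hE ▸ hΘF ▸ rank_mul_le_left Θ F)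
  have hF : F.rank = Fintype.card ν := by
    rwa [← rank_mul_eq_right_of_isUnit_det Θ F ((isUnit_iff_isUnit_det Θ).mp hΘ), hΘF]
  obtain ⟨G, hG⟩ := exists_mul_eq_one_of_rank_eq_card_height F hF
  refine ⟨Θ, hΘ, ?_, hΘF⟩
  calc C' = C' * F * G := by rw [Matrix.mul_assoc, hG, Matrix.mul_one]
    _ = C * Θ * F * G := by rw [h, Matrix.mul_assoc C Θ, hΘF]
    _ = C * Θ := by rw [Matrix.mul_assoc, hG, Matrix.mul_one]

end Matrix

theorem unfold3_injective {L M N : ℕ} :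
    Function.Injective (unfold3 : (Fin L → Fin M → Fin N → ℝ) → _) := by
  intro D D' h
  funext l m n
  exact congrFun (congrFun h n) (l, m)

theorem unfold3_tucker {L M N I J K : ℕ} (D : Fin L → Fin M → Fin N → ℝ)
    (A : Matrix (Fin I) (Fin L) ℝ) (B : Matrix (Fin J) (Fin M) ℝ)
    (C : Matrix (Fin K) (Fin N) ℝ) :
    unfold3 (tucker D A B C) = C * unfold3 D * (A ⊗ₖ B)ᵀ := by
  ext k ⟨i, j⟩
  simp only [unfold3, tucker, Matrix.of_apply, Matrix.mul_apply, Matrix.transpose_apply,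
    Matrix.kroneckerMap_apply, Fintype.sum_prod_type, Finset.sum_mul]
  exact Fintype.sum_congr _ _ fun l => Fintype.sum_congr _ _ fun m =>
    Fintype.sum_congr _ _ fun n => by ring

theorem unfold3_sum_mul {L M N K : ℕ} (D : Fin L → Fin M → Fin N → ℝ)
    (C : Matrix (Fin K) (Fin N) ℝ) :
    unfold3 (fun l m k => ∑ n, D l m n * C k n) = C * unfold3 D := by
  ext k ⟨l, m⟩
  simp only [unfold3, Matrix.of_apply, Matrix.mul_apply, mul_comm]

theorem core_and_third_factor_transfer_general
    (L M N K : ℕ)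
    (D D' : Fin L → Fin M → Fin N → ℝ)
    (C C' : Matrix (Fin K) (Fin N) ℝ)
    (Θa : Matrix (Fin L) (Fin L) ℝ) (Θb : Matrix (Fin M) (Fin M) ℝ)
    (ha : IsUnit Θa) (hb : IsUnit Θb)
    (hD : (unfold3 D).rank = N)
    (hC : C.rank = N)
    (heq : tucker D' Θa Θb C' = fun l m k => ∑ n, D l m n * C k n) :
    C'.rank = N ∧ (unfold3 D').rank = N ∧
      ∃ Θc : Matrix (Fin N) (Fin N) ℝ, IsUnit Θc ∧
        C' = C * Θc ∧ tucker D' Θa Θb Θc = D := by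
  set P := (Θa ⊗ₖ Θb)ᵀ
  have hP : IsUnit P.det := by
    rw [Matrix.det_transpose, ← Matrix.isUnit_iff_isUnit_det]
    exact Matrix.isUnit_kronecker ha hb
  have hunfold : C' * (unfold3 D' * P) = C * unfold3 D := by
    rw [← Matrix.mul_assoc, ← unfold3_tucker, heq, unfold3_sum_mul]
  obtain ⟨Θc, hΘc, hC', hΘcF⟩ :=
    Matrix.exists_isUnit_of_mul_eq_mul (by simpa using hC) (by simpa using hD) hunfold
  have hΘc_det : IsUnit Θc.det := (Matrix.isUnit_iff_isUnit_det Θc).mp hΘc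
  refine ⟨?_, ?_, Θc, hΘc, hC', unfold3_injective ?_⟩
  · rw [hC', Matrix.rank_mul_eq_left_of_isUnit_det Θc C hΘc_det, hC]
  · rw [← Matrix.rank_mul_eq_left_of_isUnit_det P _ hP,
      ← Matrix.rank_mul_eq_right_of_isUnit_det Θc _ hΘc_det, hΘcF, hD]
  · rw [unfold3_tucker, Matrix.mul_assoc, hΘcF]

/-- **Core-tensor and third-factor transfer lemma** (the deterministic step
(B.3)–(B.6) in the proof of Theorem 1). -/
theorem core_and_third_factor_transfer
    (L M N K : ℕ) (hL : 0 < L) (hM : 0 < M) (hN : 0 < N) (hK0 : 0 < K)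
    (hNLM : N ≤ L * M) (hKN : K ≥ N)
    (D D' : Fin L → Fin M → Fin N → ℝ)
    (C C' : Matrix (Fin K) (Fin N) ℝ)
    (Θa : Matrix (Fin L) (Fin L) ℝ) (Θb : Matrix (Fin M) (Fin M) ℝ)
    (ha : IsUnit Θa) (hb : IsUnit Θb)
    (hD : (unfold3 D).rank = N)
    (hC : C.rank = N)
    (heq : tucker D' Θa Θb C' = fun l m k => ∑ n, D l m n * C k n) :
    C'.rank = N ∧ (unfold3 D').rank = N ∧
      ∃ Θc : Matrix (Fin N) (Fin N) ℝ, IsUnit Θc ∧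
        C' = C * Θc ∧ tucker D' Θa Θb Θc = D :=
  core_and_third_factor_transfer_general L M N K D D' C C' Θa Θb ha hb hD hC heq
end

section
/- Generic linear independence of column subsets. Let K, n, s be positive integers with s ≤ K and s ≤ n. For Lebesgue-almost every matrix M ∈ ℝ^{K×n} (with respect to Lebesgue/volume measure on the space of K×n real matrices), every set of s columns of M is linearly independent: for every subset S of column indices with |S| = s, the family of columns (M[:,q])_{q ∈ S} is linearly independent in ℝ^K. -/
/-!
The columns of `M` indexed by `S` are independent as soon as the `s × s` minor of `M` on the first
`s` rows and the columns `S` is nonzero. That minor is a nonzero polynomial in the entries of `M`,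
and the zero set of a nonzero real polynomial is Lebesgue-null: induct on the number of variables
with Fubini, since off a null set of values of the other variables the leading coefficient in the
first variable does not vanish, leaving a one-variable polynomial with finitely many roots.
There are finitely many `S`, so the exceptional null sets can be collected.
-/

open Matrix MeasureTheory

theorem Polynomial.ae_eval_ne_zero {μ : Measure ℝ} [NullSingletonClass μ] {p : Polynomial ℝ}
    (hp : p ≠ 0) : ∀ᵐ x ∂μ, p.eval x ≠ 0 :=
  (Polynomial.finite_setOfPred_isRoot hp).countable.ae_notMem μ

theorem MeasureTheory.ae_of_ae_ae_fin_cons {α : Type*} [MeasureSpace α]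
    [SigmaFinite (volume : Measure α)] {m : ℕ} {P : (Fin (m + 1) → α) → Prop}
    (hP : MeasurableSet {x | P x})
    (h : ∀ᵐ t : Fin m → α, ∀ᵐ y : α, P (Fin.cons y t)) : ∀ᵐ x, P x := by
  let e : (Fin (m + 1) → α) ≃ᵐ (Fin m → α) × α :=
    (MeasurableEquiv.piFinSuccAbove (fun _ => α) 0).trans MeasurableEquiv.prodComm
  have he : MeasurePreserving e volume ((volume : Measure (Fin m → α)).prod volume) :=
    Measure.measurePreserving_swap.comp (volume_preserving_piFinSuccAbove (fun _ => α) 0)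
  have hprod : ∀ᵐ z ∂(volume : Measure (Fin m → α)).prod volume, P (e.symm z) := by
    refine (Measure.ae_prod_iff_ae_ae (e.symm.measurable hP)).2 ?_
    change ∀ᵐ t : Fin m → α, ∀ᵐ y, P (Fin.insertNth 0 y t)
    simpa only [Fin.insertNth_zero'] using h
  filter_upwards [he.quasiMeasurePreserving.ae hprod] with x hx
  simpa using hx

theorem MvPolynomial.ae_eval_ne_zero_of_fin :
    ∀ {m : ℕ} {p : MvPolynomial (Fin m) ℝ}, p ≠ 0 → ∀ᵐ x, eval x p ≠ 0
  | 0, p, hp => by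
    obtain ⟨c, rfl⟩ := C_surjective (Fin 0) p
    exact ae_of_all _ fun x => by simpa using hp
  | m + 1, p, hp => by
    set q := finSuccEquiv ℝ m p
    have hq : q.leadingCoeff ≠ 0 :=
      Polynomial.leadingCoeff_ne_zero.2 ((map_ne_zero_iff _ (finSuccEquiv ℝ m).injective).2 hp)
    refine ae_of_ae_ae_fin_cons
      (isClosed_eq (continuous_eval p) continuous_const).isOpen_compl.measurableSet ?_
    filter_upwards [ae_eval_ne_zero_of_fin hq] with t ht
    have hqt : q.map (eval t) ≠ 0 := by
      rwa [← Polynomial.leadingCoeff_ne_zero,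
        Polynomial.leadingCoeff_map_of_leadingCoeff_ne_zero _ ht]
    filter_upwards [Polynomial.ae_eval_ne_zero hqt] with y hy
    rwa [eval_eq_eval_mv_eval']

theorem MvPolynomial.ae_eval_ne_zero {ι : Type*} [Fintype ι] {p : MvPolynomial ι ℝ} (hp : p ≠ 0) :
    ∀ᵐ x, eval x p ≠ 0 := by
  let e := Fintype.equivFin ι
  have hT := volume_preserving_arrowCongr' e (MeasurableEquiv.refl ℝ) (.id volume)
  have hq : rename e p ≠ 0 := (map_ne_zero_iff _ (rename_injective e e.injective)).2 hp
  filter_upwards [hT.quasiMeasurePreserving.ae (ae_eval_ne_zero_of_fin hq)] with x hx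
  rw [eval_rename] at hx
  change eval (fun i => x (e.symm (e i))) p ≠ 0 at hx
  simpa using hx

theorem MeasureTheory.volume_preserving_uncurry (ι κ α : Type*) [Fintype ι] [Fintype κ]
    [MeasureSpace α] [SigmaFinite (volume : Measure α)] :
    MeasurePreserving (Function.uncurry : (ι → κ → α) → ι × κ → α) volume volume := by
  classical
  have hmeas : Measurable (Function.uncurry : (ι → κ → α) → ι × κ → α) :=
    (MeasurableEquiv.curry ι κ α).symm.measurable
  refine ⟨hmeas, (Measure.pi_eq fun t ht => ?_).symm⟩
  have hpre : Function.uncurry ⁻¹' Set.univ.pi t =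
      Set.univ.pi fun i => Set.univ.pi fun j => t (i, j) := by
    ext x
    simp only [Set.mem_preimage, Set.mem_univ_pi, Prod.forall, Function.uncurry_apply_pair]
  rw [Measure.map_apply hmeas (.univ_pi ht), hpre, volume_pi_pi]
  simp_rw [volume_pi_pi]
  exact (Fintype.prod_prod_type fun q => volume (t q)).symm

theorem Matrix.linearIndependent_cols_of_det_submatrix_ne_zero {l m n R : Type*} [Fintype l]
    [DecidableEq l] [CommRing R] [IsDomain R] {M : Matrix m n R} {r : l → m} {c : l → n}
    (h : (M.submatrix r c).det ≠ 0) : LinearIndependent R fun j => Mᵀ (c j) :=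
  (linearIndependent_cols_of_det_ne_zero h).of_comp (LinearMap.funLeft R R r)

theorem Matrix.ae_det_submatrix_ne_zero {K n : ℕ} {l : Type*} [Fintype l] [DecidableEq l]
    {r : l → Fin K} {c : l → Fin n} (hr : r.Injective) (hc : c.Injective) :
    ∀ᵐ M : Matrix (Fin K) (Fin n) ℝ, (M.submatrix r c).det ≠ 0 := by
  have hP : MvPolynomial.rename (Prod.map r c) (mvPolynomialX l l ℝ).det ≠ 0 :=
    (map_ne_zero_iff _ (MvPolynomial.rename_injective _ (hr.prodMap hc))).2
      (det_mvPolynomialX_ne_zero l ℝ)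
  filter_upwards [(volume_preserving_uncurry (Fin K) (Fin n) ℝ).quasiMeasurePreserving.ae
    (MvPolynomial.ae_eval_ne_zero hP)] with M hM
  change MvPolynomial.eval (Function.uncurry M) _ ≠ 0 at hM
  rwa [MvPolynomial.eval_rename, eval_det_mvPolynomialX] at hM

theorem generic_column_subsets_linearIndependent_general
    (K n s : ℕ) (hsK : s ≤ K) :
    ∀ᵐ M : Matrix (Fin K) (Fin n) ℝ ∂volume,
      ∀ S : Finset (Fin n), S.card = s →
        LinearIndependent ℝ (fun q : S => Mᵀ (q : Fin n)) := by
  refine ae_all_iff.2 fun S => ?_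
  by_cases hS : S.card = s
  · let e := (S.orderIsoOfFin hS).toEquiv
    filter_upwards [ae_det_submatrix_ne_zero (Fin.castLE_injective hsK)
      (Subtype.val_injective.comp e.injective)] with M hM _
    exact (linearIndependent_equiv e).1 (linearIndependent_cols_of_det_submatrix_ne_zero hM)
  · exact .of_forall fun M h => absurd h hS

/-- **Generic linear independence of column subsets.** For Lebesgue-almost
every `K × n` real matrix, every set of `s` columns is linearly independent
(provided `s ≤ K` and `s ≤ n`). -/
theorem generic_column_subsets_linearIndependent
    (K n s : ℕ) (hs : 0 < s) (hsK : s ≤ K) (hsn : s ≤ n) :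
    ∀ᵐ M : Matrix (Fin K) (Fin n) ℝ ∂volume,
      ∀ S : Finset (Fin n), S.card = s →
        LinearIndependent ℝ (fun q : S => Mᵀ (q : Fin n)) :=
  generic_column_subsets_linearIndependent_general K n s hsK
end
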